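/- arXiv:1809.07307 — 2 statements merged into one kernel-verified Lean document; each statement's English description precedes it below -/
import Mathlib

section
/- In the shard-based blockchain game with equal reward sharing, the all-cooperate strategy profile is never a Nash equilibrium when the shard size n satisfies n ≥ τ + 1 and c^f + x·c^v > 0: any single processor that unilaterally defects still leaves at least τ cooperators in its shard (so the block is still committed and rewards are unchanged) while saving the optional cost, strictly increasing its payoff from (BR + r·T)/N − (c^m + c^f + x·c^v) to (BR + r·T)/N − c^m. -/
/-- Number of cooperators in shard `j` under profile `σ` (`true` = cooperate). -/
def countCoop {N k : ℕ} (shard : Fin N → Fin k) (σ : Fin N → Bool) (j : Fin k) : ℕ :=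
  (Finset.univ.filter (fun i => shard i = j ∧ σ i = true)).card

/-- Payoff of processor `i` under equal reward sharing. -/
noncomputable def payoffEq {N k : ℕ} (shard : Fin N → Fin k) (τ : ℕ)
    (BR TF cm cf cv x : ℝ) (σ : Fin N → Bool) (i : Fin N) : ℝ :=
  (if ∀ j : Fin k, τ ≤ countCoop shard σ j then (BR + TF) / N else 0)
    - cm - (if σ i then cf + x * cv else 0)

/-- With equal reward sharing, shard size `n ≥ τ + 1` and positive optional
cost, every processor strictly gains by unilaterally defecting from the
all-cooperate profile; hence all-cooperation is never a Nash equilibrium. -/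
theorem allCooperate_not_NE (N k τ n : ℕ) (shard : Fin N → Fin k)
    (BR r T cm cf cv x : ℝ)
    (hsize : ∀ j : Fin k, (Finset.univ.filter (fun i => shard i = j)).card = n)
    (hn : τ + 1 ≤ n)
    (hopt : 0 < cf + x * cv) :
    ∀ i : Fin N,
      payoffEq shard τ BR (r * T) cm cf cv x
          (Function.update (fun _ => true) i false) i
        > payoffEq shard τ BR (r * T) cm cf cv x (fun _ => true) i := by
  intro i
  have hall : ∀ j : Fin k, τ ≤ countCoop shard (fun _ => true) j := by
    intro j
    have : countCoop shard (fun _ => true) j = n := by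
      rw [← hsize j]; unfold countCoop; congr 1; ext y; simp
    omega
  have hdef : ∀ j : Fin k,
      τ ≤ countCoop shard (Function.update (fun _ => true) i false) j := by
    intro j
    have hsub : (Finset.univ.filter (fun y => shard y = j)).erase i ⊆
        Finset.univ.filter (fun y : Fin N =>
          shard y = j ∧ Function.update (fun _ => true) i false y = true) := by
      intro y hy
      simp only [Finset.mem_erase, Finset.mem_filter] at hy ⊢
      refine ⟨Finset.mem_univ y, hy.2.2, ?_⟩
      rw [Function.update_of_ne hy.1]
    have hcard := Finset.card_le_card hsub
    have herase : n - 1 ≤ ((Finset.univ.filter (fun y => shard y = j)).erase i).card := by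
      have := Finset.pred_card_le_card_erase (s := Finset.univ.filter (fun y => shard y = j)) (a := i)
      rw [hsize j] at this
      exact this
    unfold countCoop
    omega
  simp only [payoffEq, if_pos hall, if_pos hdef, Function.update_self, if_pos rfl]
  simp only [if_neg (Bool.false_ne_true), sub_zero, if_true]
  linarith
end

section
/- The cooperation threshold θ¹(l) = (c^f − BR/(k·l))/(r/l − c^v) is strictly increasing in l on the interval where 1 ≤ l < r/c^v and c^f·c^v·k·l² terms make the derivative positive; specifically, if BR, c^f, r, c^v, k > 0, c^f > BR/(k·l) and r/l > c^v for all l in the range considered, then θ¹(l+1) > θ¹(l). Hence larger committees of cooperators require more transactions to sustain cooperation. -/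
/-!
Both effects of adding a cooperator push θ¹ up: the block-reward share `BR/(k l)` shrinks, so the
positive numerator `c^f − BR/(k l)` grows, while the fee share `r/l` shrinks, so the positive
denominator `r/l − c^v` falls.
-/

theorem sub_div_mul_lt_sub_div_mul_add_one {BR k l : ℝ} (c : ℝ)
    (hBR : 0 < BR) (hk : 0 < k) (hl : 0 < l) :
    c - BR / (k * l) < c - BR / (k * (l + 1)) := by
  have : BR / (k * (l + 1)) < BR / (k * l) :=
    div_lt_div_of_pos_left hBR (by positivity) (by nlinarith)
  linarith

theorem div_add_one_sub_lt_div_sub {r l : ℝ} (c : ℝ) (hr : 0 < r) (hl : 0 < l) :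
    r / (l + 1) - c < r / l - c :=
  sub_lt_sub_right (div_lt_div_of_pos_left hr hl (lt_add_one l)) c

theorem theta1_increasing_in_l_general
    (BR cf r cv k l : ℝ)
    (hk : 1 ≤ k) (hl : 1 ≤ l)
    (hBR : 0 < BR) (hr : 0 < r)
    (hden : cv < r / (l + 1))
    (hnum : BR / (k * l) < cf) :
    (cf - BR / (k * (l + 1))) / (r / (l + 1) - cv)
      > (cf - BR / (k * l)) / (r / l - cv) := by
  have hk₀ : 0 < k := by linarith
  have hl₀ : 0 < l := by linarith
  have hnum_lt := sub_div_mul_lt_sub_div_mul_add_one cf hBR hk₀ hl₀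
  have hnum_pos : 0 < cf - BR / (k * l) := sub_pos.mpr hnum
  exact div_lt_div₀ hnum_lt (div_add_one_sub_lt_div_sub cv hr hl₀).le
    (hnum_pos.trans hnum_lt).le (sub_pos.mpr hden)

/-- The cooperation threshold `θ¹(l) = (c^f − BR/(k·l))/(r/l − c^v)` is
strictly increasing in the number of cooperators `l`: `θ¹(l+1) > θ¹(l)`.
Larger groups of cooperators require more transactions to sustain
cooperation. -/
theorem theta1_increasing_in_l
    (BR cf r cv k l : ℝ)
    (hk : 1 ≤ k) (hl : 1 ≤ l)
    (hBR : 0 < BR) (hcf : 0 < cf) (hr : 0 < r) (hcv : 0 < cv)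
    (hden : cv < r / (l + 1))
    (hnum : BR / (k * l) < cf) :
    (cf - BR / (k * (l + 1))) / (r / (l + 1) - cv)
      > (cf - BR / (k * l)) / (r / l - cv) :=
  theta1_increasing_in_l_general BR cf r cv k l hk hl hBR hr hden hnum
end
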